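/- arXiv:math/0107023 — 2 statements merged into one kernel-verified Lean document; each statement's English description precedes it below -/
import Mathlib

section
/- (Lemma 5.) Let η ≥ 1 and z₁, …, z_η ∈ Ξ. Then the matrix product (D z₁ z₁*) · (D z₂ z₂*) · … · (D z_η z_η*) equals the zero matrix if and only if there exists an index ι₀ with 1 ≤ ι₀ < η such that z_{ι₀} = z_{ι₀+1}. Equivalently, the product equals (D z₁ z_η*)·ξ with ξ = (z₁*Dz₂)·(z₂*Dz₃)·…·(z_{η−1}*Dz_η), and D z₁ z_η* ≠ 0. -/
/-!
Rank-one factors telescope: `(D a b*)(D c d*) = (b* D c) · D a d*`, so the product is the scalar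
`ξ` times `D z₁ z_η*`, which is nonzero because `D` is invertible and `z₁, z_η ≠ 0`. It vanishes
iff some factor `z_ι* D z_{ι+1}` of `ξ` does. For `z, w ∈ Ξ` the Hermitian form gives
`(z - w)* D (z - w) = -2 Re (z* D w)`, and on vectors with vanishing first coordinate `D` acts as
the identity, so `z* D w = 0` forces `z = w`.
-/

open Matrix

noncomputable section

/-- The matrix `D = diag(-1,1,...,1)` of size `ν × ν` with `ν = n + 2`. -/
def Dm (n : ℕ) : Matrix (Fin (n + 2)) (Fin (n + 2)) ℂ :=
  Matrix.diagonal fun i => if i = 0 then -1 else 1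

/-- `Ξ = {z : z₁ = 1, z* D z = 0}`. -/
def Xi (n : ℕ) : Set (Fin (n + 2) → ℂ) :=
  {z | z 0 = 1 ∧ star z ⬝ᵥ (Dm n).mulVec z = 0}

namespace Matrix

variable {I R : Type*} [Fintype I]

theorem IsHermitian.star_dotProduct_mulVec_comm [CommRing R] [StarRing R] {A : Matrix I I R}
    (hA : A.IsHermitian) (x y : I → R) :
    star y ⬝ᵥ A *ᵥ x = star (star x ⬝ᵥ A *ᵥ y) := by
  rw [star_dotProduct, star_mulVec, hA.eq, dotProduct_mulVec]

theorem mul_vecMulVec_mul_mul_vecMulVec [CommSemiring R] (M : Matrix I I R) (a b c d : I → R) :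
    M * vecMulVec a b * (M * vecMulVec c d) = (b ⬝ᵥ M *ᵥ c) • (M * vecMulVec a d) := by
  rw [Matrix.mul_assoc, mul_vecMulVec M c, vecMulVec_mul_vecMulVec, vecMulVec_smul,
    Matrix.mul_smul]

theorem prod_ofFn_mul_vecMulVec [DecidableEq I] [CommSemiring R] (M : Matrix I I R) {m : ℕ}
    (u v : Fin (m + 1) → I → R) :
    (List.ofFn fun i => M * vecMulVec (u i) (v i)).prod =
      (∏ i : Fin m, v i.castSucc ⬝ᵥ M *ᵥ u i.succ) • (M * vecMulVec (u 0) (v (Fin.last m))) := by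
  induction m with
  | zero => simp
  | succ m ih =>
    rw [List.ofFn_succ, List.prod_cons, ih (fun i => u i.succ) (fun i => v i.succ),
      Matrix.mul_smul, mul_vecMulVec_mul_mul_vecMulVec, Fin.prod_univ_succ, smul_smul, mul_comm]
    rfl

end Matrix

theorem Dm_isHermitian (n : ℕ) : (Dm n).IsHermitian :=
  isHermitian_diagonal_of_self_adjoint _ <| funext fun i => by
    simp only [Pi.star_apply]; split_ifs <;> simp

theorem Dm_mul_self (n : ℕ) : Dm n * Dm n = 1 := by
  rw [Dm, diagonal_mul_diagonal, ← diagonal_one]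
  congr 1
  ext i
  split_ifs <;> norm_num

theorem Dm_mul_ne_zero {n : ℕ} {X : Matrix (Fin (n + 2)) (Fin (n + 2)) ℂ} (hX : X ≠ 0) :
    Dm n * X ≠ 0 := fun h => hX <| by
  rw [← Matrix.one_mul X, ← Dm_mul_self, Matrix.mul_assoc, h, Matrix.mul_zero]

theorem Dm_mulVec_of_apply_zero {n : ℕ} {v : Fin (n + 2) → ℂ} (hv : v 0 = 0) :
    Dm n *ᵥ v = v := by
  ext i
  by_cases hi : i = 0
  · subst hi
    simp [Dm, mulVec_diagonal, hv]
  · simp [Dm, mulVec_diagonal, hi]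

theorem ne_zero_of_mem_Xi {n : ℕ} {z : Fin (n + 2) → ℂ} (hz : z ∈ Xi n) : z ≠ 0 :=
  fun h => by simpa [h] using hz.1

open ComplexOrder in
theorem star_dotProduct_Dm_mulVec_eq_zero_iff {n : ℕ} {z w : Fin (n + 2) → ℂ} (hz : z ∈ Xi n)
    (hw : w ∈ Xi n) : star z ⬝ᵥ Dm n *ᵥ w = 0 ↔ z = w := by
  refine ⟨fun h => ?_, fun h => h ▸ hz.2⟩
  have h' : star w ⬝ᵥ Dm n *ᵥ z = 0 := by
    rw [(Dm_isHermitian n).star_dotProduct_mulVec_comm, h, star_zero]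
  have hzw : star (z - w) ⬝ᵥ Dm n *ᵥ (z - w) = 0 := by
    simp only [star_sub, mulVec_sub, sub_dotProduct, dotProduct_sub, hz.2, hw.2, h, h']
    simp
  rw [Dm_mulVec_of_apply_zero (by simp [hz.1, hw.1]), dotProduct_star_self_eq_zero] at hzw
  exact sub_eq_zero.mp hzw

/-- Lemma 5: the product `(Dz₁z₁*)(Dz₂z₂*)⋯(Dz_ηz_η*)` vanishes iff two
consecutive `z`'s coincide; moreover, it equals `ξ · (Dz₁z_η*)` with
`ξ = (z₁*Dz₂)⋯(z_{η−1}*Dz_η)`, and `Dz₁z_η* ≠ 0`. -/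
theorem stmt17 (n η : ℕ) (hη : 1 ≤ η)
    (z : Fin η → (Fin (n + 2) → ℂ)) (hz : ∀ ι, z ι ∈ Xi n) :
    ((List.ofFn fun ι => Dm n * vecMulVec (z ι) (star (z ι))).prod = 0 ↔
      ∃ (i : ℕ) (h : i + 1 < η), z ⟨i, by omega⟩ = z ⟨i + 1, h⟩) ∧
    (List.ofFn fun ι => Dm n * vecMulVec (z ι) (star (z ι))).prod =
      (∏ i : Fin (η - 1),
        (star (z ⟨i.1, by omega⟩) ⬝ᵥ (Dm n).mulVec (z ⟨i.1 + 1, by omega⟩))) •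
      (Dm n * vecMulVec (z ⟨0, by omega⟩) (star (z ⟨η - 1, by omega⟩))) ∧
    Dm n * vecMulVec (z ⟨0, by omega⟩) (star (z ⟨η - 1, by omega⟩)) ≠ 0 := by
  obtain ⟨m, rfl⟩ : ∃ m, η = m + 1 := ⟨η - 1, by omega⟩
  have hprod := prod_ofFn_mul_vecMulVec (Dm n) z fun ι => star (z ι)
  have hne : Dm n * vecMulVec (z 0) (star (z (Fin.last m))) ≠ 0 :=
    Dm_mul_ne_zero <| vecMulVec_ne_zero (ne_zero_of_mem_Xi (hz 0))
      (star_ne_zero.mpr (ne_zero_of_mem_Xi (hz _)))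
  refine ⟨?_, hprod, hne⟩
  rw [hprod, smul_eq_zero, or_iff_left hne, Finset.prod_eq_zero_iff]
  constructor
  · rintro ⟨i, -, hi⟩
    exact ⟨i, by omega, (star_dotProduct_Dm_mulVec_eq_zero_iff (hz _) (hz _)).mp hi⟩
  · rintro ⟨i, hi, heq⟩
    exact ⟨⟨i, by omega⟩, Finset.mem_univ _,
      (star_dotProduct_Dm_mulVec_eq_zero_iff (hz _) (hz _)).mpr heq⟩
end
end

section
/- (Lemma 6.) Let z ∈ Ξ, φ ∈ Φ, g ∈ Δ_z, and suppose φ and g are not both identically zero. Then: (1) deg G_z(φ,g) = deg(φ − g*g) > 0, where deg denotes polynomial degree and g*g is the scalar polynomial g(ω)*g(ω); and (2) the leading coefficient of the polynomial matrix G_z(φ,g) is a nonzero complex scalar multiple of the matrix D z z*. -/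
/-!
The coefficients of `g*g` are real and those of `φ` purely imaginary, so for real `r ≠ 0` no
cancellation occurs in `φ - r g*g`: its degree is `M = max (deg φ) (deg g*g)` for every such `r`,
in particular for `r = 1` and for `r = 1/2`. The top coefficient of `g*g` is `Σ |gᵢ,d|² > 0`
(`d` the degree of `g`), so `deg g*g = 2d`, and `d ≥ 1` when `g ≠ 0` because `g(0) = 0`. Hence
`g` has no term of degree `M`, and the degree `M` coefficient of `G_z(φ,g)` is
`(φ - g*g/2)_M • D z z*`, whose `(0,0)` entry is nonzero since `z₁ = 1`.
-/

open Polynomial Matrix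

noncomputable section

/-- Coefficientwise complex conjugation of a scalar polynomial (`ω` treated as real). -/
def cstar (p : ℂ[X]) : ℂ[X] := p.map (starRingEnd ℂ)

/-- Polynomial matrices of size `(n+2) × (n+2)`. -/
abbrev PM (n : ℕ) := Matrix (Fin (n + 2)) (Fin (n + 2)) ℂ[X]

/-- `U(ω)* = Σ Uι* ωⁱ` : coefficientwise conjugate transpose of a polynomial matrix. -/
def Mstar (n : ℕ) (U : PM n) : PM n := Matrix.of fun i j => cstar (U j i)

/-- The scalar polynomial `g(ω)* h(ω)` for vector polynomials `g, h`. -/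
def pdot (n : ℕ) (g h : Fin (n + 2) → ℂ[X]) : ℂ[X] := ∑ i, cstar (g i) * h i

/-- `Δ_z⁰ = {d : d* z = d* D z = 0}`. -/
def Delta0 (n : ℕ) (z : Fin (n + 2) → ℂ) : Set (Fin (n + 2) → ℂ) :=
  {d | star d ⬝ᵥ z = 0 ∧ star d ⬝ᵥ (Dm n).mulVec z = 0}

/-- `Φ = {φ : φ(0) = 0, φ* = -φ}`. -/
def Phi : Set ℂ[X] := {φ | φ.eval 0 = 0 ∧ cstar φ = -φ}

/-- `Δ_z` : vector polynomials vanishing at 0 with all coefficient vectors in `Δ_z⁰`. -/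
def DeltaZ (n : ℕ) (z : Fin (n + 2) → ℂ) : Set (Fin (n + 2) → ℂ[X]) :=
  {g | (∀ i, (g i).eval 0 = 0) ∧ ∀ k : ℕ, (fun i => (g i).coeff k) ∈ Delta0 n z}

/-- `G_z(φ,g) = D·[z(φ - (1/2)g*g)z* + (zg* - gz*)] + I`. -/
def Gmat (n : ℕ) (z : Fin (n + 2) → ℂ) (φ : ℂ[X]) (g : Fin (n + 2) → ℂ[X]) : PM n :=
  (Dm n).map Polynomial.C *
      Matrix.of (fun i j =>
        Polynomial.C (z i) * (φ - Polynomial.C (1 / 2 : ℂ) * pdot n g g) *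
            Polynomial.C (star (z j)) +
          (Polynomial.C (z i) * cstar (g j) - g i * Polynomial.C (star (z j)))) +
    1

/-- `M` : the group of polynomial matrices with `U(ω) D U(ω)* = D`. -/
def MM (n : ℕ) : Set (PM n) :=
  {U | U * (Dm n).map Polynomial.C * Mstar n U = (Dm n).map Polynomial.C}

/-- `M₀ = {U ∈ M : U(0) = I}`. -/
def M0 (n : ℕ) : Set (PM n) :=
  {U | U ∈ MM n ∧ U.map (fun p => p.eval 0) = 1}

/-- `M_z = {G_z(φ,g) : φ ∈ Φ, g ∈ Δ_z}`. -/
def Mz (n : ℕ) (z : Fin (n + 2) → ℂ) : Set (PM n) :=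
  {U | ∃ φ ∈ Phi, ∃ g ∈ DeltaZ n z, U = Gmat n z φ g}

/-- `Ψ_z = {G_z(φ,0) : φ ∈ Φ}`. -/
def Psi (n : ℕ) (z : Fin (n + 2) → ℂ) : Set (PM n) :=
  {U | ∃ φ ∈ Phi, U = Gmat n z φ 0}

/-- Degree of a polynomial matrix: the largest `ι` with a nonzero coefficient `ω^ι`. -/
def degPM (n : ℕ) (U : PM n) : ℕ :=
  Finset.univ.sup fun p : Fin (n + 2) × Fin (n + 2) => (U p.1 p.2).natDegree

lemma cstar_coeff (p : ℂ[X]) (k : ℕ) : (cstar p).coeff k = star (p.coeff k) :=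
  coeff_map _ _

lemma natDegree_cstar (p : ℂ[X]) : (cstar p).natDegree = p.natDegree :=
  natDegree_map_eq_of_injective (RingHom.injective _) p

lemma cstar_pdot_self (n : ℕ) (g : Fin (n + 2) → ℂ[X]) : cstar (pdot n g g) = pdot n g g := by
  simp [pdot, cstar, Polynomial.map_sum, Polynomial.map_map, mul_comm]

lemma coeff_sub_C_mul_eq_zero_iff {φ s : ℂ[X]} (hφ : cstar φ = -φ) (hs : cstar s = s)
    {r : ℂ} (hr : star r = r) (hr0 : r ≠ 0) (k : ℕ) :
    (φ - C r * s).coeff k = 0 ↔ φ.coeff k = 0 ∧ s.coeff k = 0 := by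
  have hφk : star (φ.coeff k) = -φ.coeff k := by rw [← cstar_coeff, hφ, coeff_neg]
  have hsk : star (s.coeff k) = s.coeff k := by rw [← cstar_coeff, hs]
  rw [coeff_sub, coeff_C_mul]
  refine ⟨fun h => ?_, fun ⟨h₁, h₂⟩ => by rw [h₁, h₂, mul_zero, sub_zero]⟩
  have hconj : -φ.coeff k - r * s.coeff k = 0 := by
    simpa [hφk, hsk, hr] using congrArg star h
  have hφ0 : φ.coeff k = 0 := by linear_combination (h - hconj) / 2
  exact ⟨hφ0, by simpa [hφ0, hr0] using h⟩

lemma natDegree_sub_C_mul {φ s : ℂ[X]} (hφ : cstar φ = -φ) (hs : cstar s = s)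
    {r : ℂ} (hr : star r = r) (hr0 : r ≠ 0) :
    (φ - C r * s).natDegree = max φ.natDegree s.natDegree := by
  have hzero := coeff_sub_C_mul_eq_zero_iff hφ hs hr hr0
  refine le_antisymm ((natDegree_sub_le _ _).trans (max_le_max le_rfl (natDegree_C_mul_le _ _)))
    (max_le ?_ ?_)
  · rcases eq_or_ne φ 0 with rfl | hφ0
    · simp
    · exact le_natDegree_of_ne_zero fun h => hφ0 (leadingCoeff_eq_zero.mp ((hzero _).mp h).1)
  · rcases eq_or_ne s 0 with rfl | hs0
    · simp
    · exact le_natDegree_of_ne_zero fun h => hs0 (leadingCoeff_eq_zero.mp ((hzero _).mp h).2)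

lemma natDegree_pos_of_eval_zero {R : Type*} [Semiring R] {p : R[X]} (hp : p ≠ 0)
    (h0 : p.eval 0 = 0) : 0 < p.natDegree :=
  natDegree_pos_of_eval₂_root hp (RingHom.id R) h0 fun _ => id

lemma natDegree_pdot_self (n : ℕ) (g : Fin (n + 2) → ℂ[X]) :
    (pdot n g g).natDegree = 2 * Finset.univ.sup fun i => (g i).natDegree := by
  set d := Finset.univ.sup fun i => (g i).natDegree
  have hgd : ∀ i, (g i).natDegree ≤ d :=
    fun i => Finset.le_sup (f := fun i => (g i).natDegree) (Finset.mem_univ i)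
  refine le_antisymm (natDegree_sum_le_of_forall_le _ _ fun i _ => ?_) ?_
  · exact natDegree_mul_le.trans (by rw [natDegree_cstar]; have := hgd i; omega)
  rcases Nat.eq_zero_or_pos d with hd | hd
  · simp [hd]
  obtain ⟨i₁, -, hi₁⟩ := Finset.exists_mem_eq_sup Finset.univ Finset.univ_nonempty
    fun i => (g i).natDegree
  replace hi₁ : (g i₁).natDegree = d := hi₁.symm
  have hlead : (g i₁).coeff d ≠ 0 := by
    rw [← hi₁, coeff_natDegree, Ne, leadingCoeff_eq_zero]
    rintro h
    rw [h, natDegree_zero] at hi₁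
    omega
  have htop : (pdot n g g).coeff (d + d) = ∑ i, star ((g i).coeff d) * (g i).coeff d := by
    simp only [pdot, finsetSum_coeff,
      coeff_mul_add_eq_of_natDegree_le ((natDegree_cstar _).trans_le (hgd _)) (hgd _), cstar_coeff]
  refine two_mul d ▸ le_natDegree_of_ne_zero fun h => hlead ?_
  open ComplexOrder in
  rw [htop, Finset.sum_eq_zero_iff_of_nonneg fun i _ => star_mul_self_nonneg _] at h
  simpa using h i₁ (Finset.mem_univ _)

lemma natDegree_lt_max_natDegree_pdot {n : ℕ} {φ : ℂ[X]} {g : Fin (n + 2) → ℂ[X]}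
    (hφ0 : φ.eval 0 = 0) (hg0 : ∀ i, (g i).eval 0 = 0) (hnt : ¬(φ = 0 ∧ g = 0))
    (i : Fin (n + 2)) : (g i).natDegree < max φ.natDegree (pdot n g g).natDegree := by
  by_cases hg : g = 0
  · have hφ : φ ≠ 0 := fun h => hnt ⟨h, hg⟩
    simpa only [hg, Pi.zero_apply, natDegree_zero] using
      lt_max_of_lt_left (natDegree_pos_of_eval_zero hφ hφ0)
  · obtain ⟨j, hj⟩ : ∃ j, g j ≠ 0 := by
      by_contra! h
      exact hg (funext h)
    have hle : ∀ i, (g i).natDegree ≤ Finset.univ.sup fun i => (g i).natDegree :=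
      fun i => Finset.le_sup (f := fun i => (g i).natDegree) (Finset.mem_univ i)
    have hj₀ := natDegree_pos_of_eval_zero hj (hg0 j)
    refine lt_max_of_lt_right ?_
    rw [natDegree_pdot_self]
    have := hle i
    have := hle j
    omega

lemma Gmat_map_coeff_of_coeff_eq_zero {n : ℕ} {z : Fin (n + 2) → ℂ} {φ : ℂ[X]}
    {g : Fin (n + 2) → ℂ[X]} {k : ℕ} (hk : k ≠ 0) (hgk : ∀ i, (g i).coeff k = 0) :
    (Gmat n z φ g).map (fun p => p.coeff k) =
      (φ - C (1 / 2) * pdot n g g).coeff k • (Dm n * vecMulVec z (star z)) := by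
  ext i j
  simp [Gmat, Dm, Matrix.diagonal_map, Matrix.diagonal_mul, Matrix.one_apply, coeff_C_mul,
    coeff_mul_C, cstar_coeff, hgk, hk, vecMulVec_apply, apply_ite (fun p : ℂ[X] => p.coeff k),
    coeff_one]
  split_ifs <;> ring

lemma degPM_eq_of_map_coeff {n : ℕ} {U : PM n} {m : ℕ}
    (hgt : ∀ k, m < k → U.map (fun p => p.coeff k) = 0)
    (hm : U.map (fun p => p.coeff m) ≠ 0) : degPM n U = m := by
  refine le_antisymm (Finset.sup_le fun ij _ => natDegree_le_iff_coeff_eq_zero.mpr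
    fun k hk => congrFun (congrFun (hgt k hk) ij.1) ij.2) ?_
  obtain ⟨i, j, hij⟩ : ∃ i j, (U i j).coeff m ≠ 0 := by
    by_contra! h
    exact hm (Matrix.ext h)
  exact (le_natDegree_of_ne_zero hij).trans
    (Finset.le_sup (f := fun p : Fin (n + 2) × Fin (n + 2) => (U p.1 p.2).natDegree)
      (Finset.mem_univ (i, j)))

lemma Dm_mul_vecMulVec_ne_zero {n : ℕ} {z : Fin (n + 2) → ℂ} (hz0 : z 0 = 1) :
    Dm n * vecMulVec z (star z) ≠ 0 := fun h => by
  simpa [Dm, vecMulVec_apply, hz0] using congrFun (congrFun h 0) 0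

/-- Lemma 6: if `φ` and `g` are not both zero, then
`deg G_z(φ,g) = deg(φ − g*g) > 0` and the leading coefficient of `G_z(φ,g)` is a
nonzero scalar multiple of `D z z*`. -/
theorem stmt18 (n : ℕ) (z : Fin (n + 2) → ℂ) (hz : z ∈ Xi n)
    (φ : ℂ[X]) (hφ : φ ∈ Phi) (g : Fin (n + 2) → ℂ[X]) (hg : g ∈ DeltaZ n z)
    (hnt : ¬(φ = 0 ∧ g = 0)) :
    degPM n (Gmat n z φ g) = (φ - pdot n g g).natDegree ∧
      0 < (φ - pdot n g g).natDegree ∧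
      ∃ c : ℂ, c ≠ 0 ∧
        (Gmat n z φ g).map (fun p => p.coeff (degPM n (Gmat n z φ g))) =
          c • (Dm n * vecMulVec z (star z)) := by
  obtain ⟨hz0, -⟩ := hz
  obtain ⟨hφ0, hφstar⟩ := hφ
  obtain ⟨hg0, -⟩ := hg
  set M := max φ.natDegree (pdot n g g).natDegree
  set ψ := φ - C (1 / 2) * pdot n g g
  have hgM : ∀ i, (g i).natDegree < M := natDegree_lt_max_natDegree_pdot hφ0 hg0 hnt
  have hMpos : 0 < M := (Nat.zero_le _).trans_lt (hgM 0)
  have hdeg_sub : (φ - pdot n g g).natDegree = M := by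
    simpa using natDegree_sub_C_mul hφstar (cstar_pdot_self n g) (star_one ℂ) one_ne_zero
  have hψ : ψ.natDegree = M :=
    natDegree_sub_C_mul hφstar (cstar_pdot_self n g) (by simp) (by norm_num)
  have hψM : ψ.coeff M ≠ 0 := by
    rw [← hψ, coeff_natDegree, Ne, leadingCoeff_eq_zero]
    rintro h
    rw [h, natDegree_zero] at hψ
    omega
  have hcoeff : ∀ k, M ≤ k → (Gmat n z φ g).map (fun p => p.coeff k) =
      ψ.coeff k • (Dm n * vecMulVec z (star z)) := fun k hk =>
    Gmat_map_coeff_of_coeff_eq_zero (by omega)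
      fun i => coeff_eq_zero_of_natDegree_lt ((hgM i).trans_le hk)
  have hdeg : degPM n (Gmat n z φ g) = M := by
    refine degPM_eq_of_map_coeff (fun k hk => ?_) ?_
    · rw [hcoeff k hk.le, coeff_eq_zero_of_natDegree_lt (hψ ▸ hk), zero_smul]
    · rw [hcoeff M le_rfl]
      exact smul_ne_zero hψM (Dm_mul_vecMulVec_ne_zero hz0)
  exact ⟨hdeg.trans hdeg_sub.symm, hdeg_sub ▸ hMpos, ψ.coeff M, hψM, hdeg ▸ hcoeff M le_rfl⟩
end
end
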